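/- At the positive equilibrium E* = (S*, x₁*, ..., xₙ*) of the multi-species reduced model, the Jacobian has the arrow form of Lemma (arrow matrix) with a_i = x_i* ∂μᵢ/∂S > 0, b_i = x_i*(dᵢ'(x_i*) - ∂μᵢ/∂xᵢ(S*,x_i*)) > 0, c_i = -x_i* ∂μᵢ/∂xᵢ - dᵢ(x_i*); under H6–H8 one has a_i > 0, b_i > 0 and c_i < b_i, hence E* is locally exponentially stable. -/

import Mathlib

open Matrix

lemma exists_eigvec_of_mem_spectrum {m : Type*} [Fintype m] [DecidableEq m]
    (M : Matrix m m ℂ) {z : ℂ} (hz : z ∈ spectrum ℂ M) :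
    ∃ v : m → ℂ, v ≠ 0 ∧ M.mulVec v = z • v := by
  rw [← AlgEquiv.spectrum_eq (Matrix.toLinAlgEquiv' : Matrix m m ℂ ≃ₐ[ℂ] _),
    ← Module.End.hasEigenvalue_iff_mem_spectrum] at hz
  obtain ⟨v, hv⟩ := hz.exists_hasEigenvector
  exact ⟨v, hv.right, by simpa [Matrix.toLinAlgEquiv'_apply, Matrix.toLin'_apply]
    using hv.apply_eq_smul⟩

theorem stmt16 (n : ℕ) (D : ℝ) (hD : 0 < D)
    -- per-species data at the positive equilibrium E* = (S*, x₁*, ..., xₙ*):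
    (xs muS mux dval d' : Fin n → ℝ)
    (hx : ∀ i, 0 < xs i)                 -- xᵢ* > 0
    (hmuS : ∀ i, 0 < muS i)              -- H6 : ∂μᵢ/∂S (S*, xᵢ*) > 0
    (hmux : ∀ i, mux i < 0)              -- H6 : ∂μᵢ/∂xᵢ (S*, xᵢ*) < 0
    (hH8 : ∀ i, mux i < d' i)            -- H8 : dᵢ' > ∂μᵢ/∂xᵢ
    (hxd : ∀ i, 0 < dval i + xs i * d' i) -- H7 : (xᵢ dᵢ(xᵢ))' > 0 at xᵢ*
    (a b c : Fin n → ℝ)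
    (hA : ∀ i, a i = xs i * muS i)
    (hB : ∀ i, b i = xs i * (d' i - mux i))
    (hC : ∀ i, c i = -(xs i * mux i) - dval i)
    -- the Jacobian at E* has the arrow form
    (A : Matrix (Unit ⊕ Fin n) (Unit ⊕ Fin n) ℝ)
    (hArr : ∀ i j, A i j =
      match i, j with
      | Sum.inl _, Sum.inl _ => -D - ∑ k, a k
      | Sum.inl _, Sum.inr j => c j
      | Sum.inr i, Sum.inl _ => a i
      | Sum.inr i, Sum.inr j => if i = j then -b i else 0) :
    (∀ i, 0 < a i) ∧ (∀ i, 0 < b i) ∧ (∀ i, c i < b i) ∧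
    -- hence E* is locally exponentially stable
    ∀ z ∈ spectrum ℂ (A.map (algebraMap ℝ ℂ)), z.re < 0 := by
  have ha : ∀ i, 0 < a i := fun i => by
    rw [hA i]; exact mul_pos (hx i) (hmuS i)
  have hb : ∀ i, 0 < b i := fun i => by
    rw [hB i]; exact mul_pos (hx i) (sub_pos.mpr (hH8 i))
  have hcb : ∀ i, c i < b i := fun i => by
    have h := hxd i
    rw [hB i, hC i]; nlinarith
  refine ⟨ha, hb, hcb, ?_⟩
  intro z hz
  by_contra hrez
  push_neg at hrez
  obtain ⟨v, hv0, hv⟩ := exists_eigvec_of_mem_spectrum _ hz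
  set u : ℂ := v (Sum.inl ()) with hu
  have key : ∀ i : Fin n, (z + (b i : ℂ)) * v (Sum.inr i) = (a i : ℂ) * u := by
    intro i
    have h1 := congrFun hv (Sum.inr i)
    simp only [Matrix.mulVec, Matrix.map_apply, Pi.smul_apply, smul_eq_mul,
      dotProduct, Fintype.sum_sum_type, hArr, Complex.coe_algebraMap,
      Finset.univ_unique, Finset.sum_singleton] at h1
    rw [Finset.sum_congr rfl (fun j (_ : j ∈ Finset.univ) => by
        rw [show ((if i = j then -b i else 0 : ℝ) : ℂ) * v (Sum.inr j)
          = if i = j then (-b i : ℝ) * v (Sum.inr j) else 0 by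
            by_cases hij : i = j <;> simp [hij]]),
      Finset.sum_ite_eq Finset.univ i
        (fun j => ((-b i : ℝ) : ℂ) * v (Sum.inr j))] at h1
    simp only [Finset.mem_univ, if_true] at h1
    have : (PUnit.unit : Unit) = () := rfl
    push_cast at h1
    linear_combination -h1
  have hzb : ∀ i : Fin n, z + (b i : ℂ) ≠ 0 := by
    intro i h
    have h2 : (z + (b i : ℂ)).re = 0 := by rw [h]; rfl
    simp [Complex.add_re] at h2
    linarith [hb i]
  have hune : u ≠ 0 := by
    intro h0
    apply hv0
    funext j
    cases j with
    | inl _ => simpa [hu] using h0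
    | inr i =>
      have hki := key i
      rw [h0, mul_zero] at hki
      exact (mul_eq_zero.mp hki).resolve_left (hzb i)
  -- first row equation
  have h0 := congrFun hv (Sum.inl ())
  simp only [Matrix.mulVec, Matrix.map_apply, Pi.smul_apply, smul_eq_mul,
    dotProduct, Fintype.sum_sum_type, hArr, Complex.coe_algebraMap,
    Finset.univ_unique, Finset.sum_singleton] at h0
  have hw : ∀ i, v (Sum.inr i) = (a i : ℂ) * u / (z + (b i : ℂ)) := fun i => by
    rw [eq_div_iff (hzb i), mul_comm]
    exact key i
  simp only [hw] at h0
  -- divide by u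
  have hmain : z + (D : ℂ) + ∑ k, (a k : ℂ) * (1 - (c k : ℂ) / (z + (b k : ℂ))) = 0 := by
    have expand : (z + (D : ℂ) + ∑ k, (a k : ℂ) * (1 - (c k : ℂ) / (z + (b k : ℂ)))) * u
        = z * u + (D : ℂ) * u
          + ∑ k, ((a k : ℂ) * u - (c k : ℂ) * ((a k : ℂ) * u / (z + (b k : ℂ)))) := by
      rw [add_mul, add_mul, Finset.sum_mul]
      congr 1
      refine Finset.sum_congr rfl fun k _ => ?_
      have hk := hzb k
      field_simp
    have hz0 : (z + (D : ℂ) + ∑ k, (a k : ℂ) * (1 - (c k : ℂ) / (z + (b k : ℂ)))) * u = 0 := by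
      rw [expand, Finset.sum_sub_distrib, ← Finset.sum_mul]
      push_cast at h0 ⊢
      linear_combination -h0
    exact (mul_eq_zero.mp hz0).resolve_right hune
  -- take real parts
  have hterm : ∀ k : Fin n, 0 ≤ ((a k : ℂ) * (1 - (c k : ℂ) / (z + (b k : ℂ)))).re := by
    intro k
    have hbk := hb k
    have hnsq : 0 < Complex.normSq (z + (b k : ℂ)) := by
      rw [Complex.normSq_pos]; exact hzb k
    have hrepos : 0 < z.re + b k := by linarith
    have hreval : ((c k : ℂ) / (z + (b k : ℂ))).re
        = c k * (z.re + b k) / Complex.normSq (z + (b k : ℂ)) := by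
      rw [Complex.div_re]
      simp [Complex.add_re, Complex.add_im]
    have hdivre : ((c k : ℂ) / (z + (b k : ℂ))).re ≤ 1 := by
      rw [hreval, div_le_one hnsq]
      have hsq : (z.re + b k) ^ 2 ≤ Complex.normSq (z + (b k : ℂ)) := by
        rw [Complex.normSq_apply]
        simp only [Complex.add_re, Complex.add_im, Complex.ofReal_re, Complex.ofReal_im, add_zero]
        nlinarith [sq_nonneg z.im]
      nlinarith [hcb k]
    have hre2 : ((a k : ℂ) * (1 - (c k : ℂ) / (z + (b k : ℂ)))).re
        = a k * (1 - ((c k : ℂ) / (z + (b k : ℂ))).re) := by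
      rw [Complex.mul_re]
      simp [Complex.sub_re, Complex.sub_im]
    rw [hre2]
    exact mul_nonneg (le_of_lt (ha k)) (by linarith)
  have hfin := congrArg Complex.re hmain
  rw [Complex.add_re, Complex.add_re, Complex.re_sum] at hfin
  simp only [Complex.ofReal_re, Complex.zero_re] at hfin
  have hsum : 0 ≤ ∑ k, ((a k : ℂ) * (1 - (c k : ℂ) / (z + (b k : ℂ)))).re :=
    Finset.sum_nonneg fun k _ => hterm k
  linarith
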